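/- Let G be a simple graph with weights w : E → ℚ, and suppose the positive edges E⁺ can be covered by feasible sets E₁, …, E_k (so E⁺ = E₁ ∪ ⋯ ∪ E_k). Then some Eᵢ has total weight at least (1/k) · Σ_{e ∈ E⁺} w(e), and the partition achieving that Eᵢ is a coalition structure whose value is at least (1/k) times the optimal coalition structure value. -/

import Mathlib

open scoped Classical
open Finset

/-- Value of a coalition structure (labelling `p`) in a weighted graph game. -/
noncomputable def gval {V : Type} [Fintype V] {α : Type} (G : SimpleGraph V)
    (w : Sym2 V → ℚ) (p : V → α) : ℚ :=
  ∑ e : Sym2 V, if e ∈ G.edgeSet ∧ (Sym2.map p e).IsDiag then w e else 0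

/-- Sum of the weights of all positively-weighted edges of `G`. -/
noncomputable def posSum {V : Type} [Fintype V] (G : SimpleGraph V)
    (w : Sym2 V → ℚ) : ℚ :=
  ∑ e : Sym2 V, if e ∈ G.edgeSet ∧ 0 < w e then w e else 0

/-! The weights of the `Es i` add up to at least the total positive weight, since they cover
`E⁺` and are nonnegative; hence the heaviest one carries a `1/k` share. Its partition `p i` collects
all of `Es i` together with some edges that are nonnegative because `p i` separates every negative
edge, while no partition collects more than the total positive weight. -/

theorem Finset.exists_sum_le_card_nsmul {ι M : Type*} [Fintype ι] [Nonempty ι]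
    [AddCommMonoid M] [LinearOrder M] [IsOrderedAddMonoid M] (f : ι → M) :
    ∃ i, ∑ j, f j ≤ Fintype.card ι • f i := by
  obtain ⟨i, -, hi⟩ := exists_max_image univ f univ_nonempty
  exact ⟨i, sum_le_card_nsmul univ f (f i) fun j _ => hi j (mem_univ j)⟩

section WeightedGraph

variable {V : Type} (G : SimpleGraph V) (w : Sym2 V → ℚ)

theorem weight_nonneg_of_isDiag {α : Type} {p : V → α}
    (hneg : ∀ u v : V, G.Adj u v → w s(u, v) < 0 → p u ≠ p v) {e : Sym2 V}
    (he : e ∈ G.edgeSet) (hdiag : (Sym2.map p e).IsDiag) : 0 ≤ w e := by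
  induction e using Sym2.ind with
  | _ u v =>
    by_contra! hlt
    exact hneg u v he hlt (by simpa using hdiag)

variable [Fintype V]

theorem posSum_le_sum_of_cover {ι : Type*} [Fintype ι] (Es : ι → Finset (Sym2 V))
    (hnonneg : ∀ i, ∀ e ∈ Es i, 0 ≤ w e)
    (hcover : ∀ e : Sym2 V, e ∈ G.edgeSet → 0 < w e → ∃ i, e ∈ Es i) :
    posSum G w ≤ ∑ i, ∑ e ∈ Es i, w e := by
  calc posSum G w ≤ ∑ e, ∑ i, if e ∈ Es i then w e else 0 := by
        refine sum_le_sum fun e _ => ?_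
        have hterm : ∀ i, 0 ≤ if e ∈ Es i then w e else 0 := fun i => by
          split_ifs with he
          exacts [hnonneg i e he, le_rfl]
        split_ifs with hpos
        · obtain ⟨i, hi⟩ := hcover e hpos.1 hpos.2
          simpa [hi] using single_le_sum (fun j _ => hterm j) (mem_univ i)
        · exact sum_nonneg fun i _ => hterm i
    _ = ∑ i, ∑ e ∈ Es i, w e := by
        rw [sum_comm]
        simp_rw [sum_ite_mem, univ_inter]

theorem gval_le_posSum {α : Type} (q : V → α) : gval G w q ≤ posSum G w :=
  sum_le_sum fun e _ => by split_ifs <;> grind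

theorem sum_le_gval_of_forall_isDiag {α : Type} {p : V → α} {E : Finset (Sym2 V)}
    (hE : ∀ e ∈ E, e ∈ G.edgeSet ∧ (Sym2.map p e).IsDiag)
    (hneg : ∀ u v : V, G.Adj u v → w s(u, v) < 0 → p u ≠ p v) :
    ∑ e ∈ E, w e ≤ gval G w p := by
  rw [← sum_ite_mem_eq, gval]
  refine sum_le_sum fun e _ => ?_
  by_cases he : e ∈ E
  · simp [he, hE e he]
  · rw [if_neg he]
    split_ifs with hinner
    exacts [weight_nonneg_of_isDiag G w hneg hinner.1 hinner.2, le_rfl]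

end WeightedGraph

/-- If the positive edges are covered by `k` feasible sets `Es i`, each
achieved by a partition `p i` avoiding all negative edges, then some `Es i`
has total weight at least `(1/k)` of the total positive weight, and the
corresponding partition has value at least `(1/k)` of the optimal coalition
structure value. -/
theorem feasible_cover_approximation {V : Type} [Fintype V]
    (G : SimpleGraph V) (w : Sym2 V → ℚ) (k : ℕ) (hk : 1 ≤ k)
    (Es : Fin k → Finset (Sym2 V)) (p : Fin k → V → ℕ)
    (hpos : ∀ i, ∀ e ∈ Es i, e ∈ G.edgeSet ∧ 0 < w e)
    (hach : ∀ i, ∀ e ∈ Es i, (Sym2.map (p i) e).IsDiag)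
    (hneg : ∀ i, ∀ u v : V, G.Adj u v → w s(u, v) < 0 → p i u ≠ p i v)
    (hcover : ∀ e : Sym2 V, e ∈ G.edgeSet → 0 < w e → ∃ i, e ∈ Es i) :
    ∃ i : Fin k,
      posSum G w ≤ (k : ℚ) * ∑ e ∈ Es i, w e ∧
      ∀ q : V → ℕ, gval G w q ≤ (k : ℚ) * gval G w (p i) := by
  have : Nonempty (Fin k) := ⟨⟨0, hk⟩⟩
  obtain ⟨i, hi⟩ := exists_sum_le_card_nsmul fun j => ∑ e ∈ Es j, w e
  rw [Fintype.card_fin, nsmul_eq_mul] at hi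
  have hposSum : posSum G w ≤ k * ∑ e ∈ Es i, w e :=
    (posSum_le_sum_of_cover G w Es (fun j e he => (hpos j e he).2.le) hcover).trans hi
  refine ⟨i, hposSum, fun q => ?_⟩
  calc gval G w q ≤ posSum G w := gval_le_posSum G w q
    _ ≤ k * ∑ e ∈ Es i, w e := hposSum
    _ ≤ k * gval G w (p i) := by
        gcongr
        exact sum_le_gval_of_forall_isDiag G w
          (fun e he => ⟨(hpos i e he).1, hach i e he⟩) (hneg i)
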